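/- arXiv:2205.11302 — 2 statements merged into one kernel-verified Lean document; each statement's English description precedes it below -/
import Mathlib

section
/- For nonnegative integers n and real b > 0, the terminating Gauss hypergeometric sum satisfies ₂F₁(−n, b; 2b; 2) = n! · 2^{−n−1} · (1 + (−1)^n) · Γ(b + 1/2) / ((n/2)! · Γ((n+1)/2 + b)); in particular it vanishes for odd n. -/
/-!
Zeilberger's algorithm applied to the sum `S n = ₂F₁(-n, b; 2b; 2)` produces the two-step
recurrence `(2b + n + 1) S (n + 2) = (n + 1) S n`, certified by a telescoping identity between
the summands. The closed form satisfies the same recurrence (by `Γ (x + 1) = x Γ x`, and because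
it vanishes for odd `n`), and both sides agree at `n = 0` and `n = 1`.
-/

open Finset Polynomial

lemma ascPochhammer_eval_mul_add_two {R : Type*} [CommSemiring R] (j : ℕ) (x : R) :
    (ascPochhammer R j).eval x * ((x + j) * (x + j + 1))
      = x * (x + 1) * (ascPochhammer R j).eval (x + 2) := by
  have hleft : (ascPochhammer R (j + 2)).eval x
      = (ascPochhammer R j).eval x * ((x + j) * (x + j + 1)) := by
    rw [ascPochhammer_succ_eval, ascPochhammer_succ_eval]
    push_cast
    ring
  have hright : (ascPochhammer R (2 + j)).eval x
      = x * (x + 1) * (ascPochhammer R j).eval (x + 2) := by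
    rw [← ascPochhammer_mul]
    simp [ascPochhammer_succ_eval, eval_comp]
  rw [← hleft, ← hright, add_comm]

noncomputable def hyp2F1Term (b : ℝ) (n j : ℕ) : ℝ :=
  (ascPochhammer ℝ j).eval (-(n : ℝ)) * (ascPochhammer ℝ j).eval b
    / ((ascPochhammer ℝ j).eval (2 * b) * (j.factorial : ℝ)) * (2 : ℝ) ^ j

noncomputable def hyp2F1Sum (b : ℝ) (n : ℕ) : ℝ :=
  ∑ j ∈ range (n + 1), hyp2F1Term b n j

noncomputable def hyp2F1ClosedForm (b : ℝ) (n : ℕ) : ℝ :=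
  (n.factorial : ℝ) * (2 : ℝ) ^ (-(n : ℝ) - 1) * (1 + (-1 : ℝ) ^ n)
    * Real.Gamma (b + 1/2)
    / (((n / 2).factorial : ℝ) * Real.Gamma (((n : ℝ) + 1) / 2 + b))

lemma hyp2F1Term_eq_zero_of_lt (b : ℝ) {n j : ℕ} (h : n < j) : hyp2F1Term b n j = 0 := by
  simp [hyp2F1Term, ascPochhammer_eval_neg_coe_nat_of_lt h]

lemma hyp2F1Term_succ (b : ℝ) (n j : ℕ) :
    hyp2F1Term b n (j + 1)
      = hyp2F1Term b n j * (2 * ((j : ℝ) - n) * (b + j) / ((2 * b + j) * (j + 1))) := by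
  simp only [hyp2F1Term, ascPochhammer_succ_eval, Nat.factorial_succ, pow_succ]
  push_cast
  simp only [div_eq_mul_inv, mul_inv]
  ring

lemma hyp2F1Term_eq_hyp2F1Term_add_two_mul (b : ℝ) (n j : ℕ) :
    hyp2F1Term b n j
      = hyp2F1Term b (n + 2) j * (((j : ℝ) - n - 2) * (j - n - 1) / ((n + 1) * (n + 2))) := by
  have hpoch := ascPochhammer_eval_mul_add_two j (-((n : ℝ) + 2))
  rw [show -((n : ℝ) + 2) + 2 = -n by ring] at hpoch
  have hn : ((n : ℝ) + 1) * (n + 2) ≠ 0 := by positivity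
  have hshift : (ascPochhammer ℝ j).eval (-(n : ℝ)) = (ascPochhammer ℝ j).eval (-((n : ℝ) + 2))
      * ((j - n - 2) * (j - n - 1) / ((n + 1) * (n + 2))) := by
    rw [mul_div_assoc', eq_div_iff hn]
    linear_combination -hpoch
  simp only [hyp2F1Term, hshift]
  push_cast
  simp only [div_eq_mul_inv, mul_inv]
  ring

/-- The right side is `G (j + 1) - G j` for Zeilberger's certificate
`G j = j (1 - 2b - j) / (n + 2) · hyp2F1Term b (n + 2) j`. -/
lemma hyp2F1Term_telescope (b : ℝ) (n j : ℕ) (hj : 2 * b + j ≠ 0) :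
    (2 * b + n + 1) * hyp2F1Term b (n + 2) j - (n + 1) * hyp2F1Term b n j
      = ((j : ℝ) + 1) * (1 - 2 * b - (j + 1)) / (n + 2) * hyp2F1Term b (n + 2) (j + 1)
        - (j : ℝ) * (1 - 2 * b - j) / (n + 2) * hyp2F1Term b (n + 2) j := by
  rw [hyp2F1Term_succ, hyp2F1Term_eq_hyp2F1Term_add_two_mul b n j]
  push_cast
  field_simp
  ring

lemma hyp2F1Sum_add_two (b : ℝ) (hb : 0 < b) (n : ℕ) :
    (2 * b + n + 1) * hyp2F1Sum b (n + 2) = (n + 1) * hyp2F1Sum b n := by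
  set G : ℕ → ℝ := fun j ↦ (j : ℝ) * (1 - 2 * b - j) / (n + 2) * hyp2F1Term b (n + 2) j
  have hsum : ∑ j ∈ range (n + 3),
      ((2 * b + n + 1) * hyp2F1Term b (n + 2) j - (n + 1) * hyp2F1Term b n j) = 0 := by
    calc _ = ∑ j ∈ range (n + 3), (G (j + 1) - G j) := by
          refine sum_congr rfl fun j _ ↦ ?_
          simp only [G, hyp2F1Term_telescope b n j (by positivity)]
          push_cast
          ring
      _ = 0 := by
          rw [sum_range_sub]
          simp [G, hyp2F1Term_eq_zero_of_lt b (by omega : n + 2 < n + 3)]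
  have hextend : ∑ j ∈ range (n + 3), hyp2F1Term b n j = hyp2F1Sum b n :=
    (sum_subset (range_subset_range.mpr (by omega)) fun j hj hj' ↦
      hyp2F1Term_eq_zero_of_lt b (by simp at hj hj'; omega)).symm
  rw [sum_sub_distrib, ← mul_sum, ← mul_sum, hextend] at hsum
  exact sub_eq_zero.mp hsum

lemma hyp2F1Sum_zero (b : ℝ) : hyp2F1Sum b 0 = 1 := by
  simp [hyp2F1Sum, hyp2F1Term]

lemma hyp2F1Sum_one (b : ℝ) (hb : b ≠ 0) : hyp2F1Sum b 1 = 0 := by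
  simp [hyp2F1Sum, hyp2F1Term, sum_range_succ]
  field_simp
  ring

lemma hyp2F1ClosedForm_of_odd (b : ℝ) {n : ℕ} (hn : Odd n) : hyp2F1ClosedForm b n = 0 := by
  simp [hyp2F1ClosedForm, hn.neg_one_pow]

lemma hyp2F1ClosedForm_zero (b : ℝ) (hb : 0 < b) : hyp2F1ClosedForm b 0 = 1 := by
  have hΓ : Real.Gamma (b + 1/2) ≠ 0 := (Real.Gamma_pos_of_pos (by positivity)).ne'
  simp only [hyp2F1ClosedForm, Nat.cast_zero, Nat.factorial_zero, Nat.cast_one, Nat.zero_div]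
  rw [show -(0 : ℝ) - 1 = ((-1 : ℤ) : ℝ) by norm_num, Real.rpow_intCast,
    show ((0 : ℝ) + 1) / 2 + b = b + 1/2 by ring]
  field_simp
  norm_num

lemma hyp2F1ClosedForm_add_two_of_even (b : ℝ) (hb : 0 < b) {n : ℕ} (hn : Even n) :
    (2 * b + n + 1) * hyp2F1ClosedForm b (n + 2) = (n + 1) * hyp2F1ClosedForm b n := by
  obtain ⟨k, rfl⟩ := hn
  have hhalf : (k + k) / 2 = k := by omega
  have hhalf' : (k + k + 2) / 2 = k + 1 := by omega
  have hpow : (2 : ℝ) ^ (-((k + k + 2 : ℕ) : ℝ) - 1) = (2 : ℝ) ^ (-((k + k : ℕ) : ℝ) - 1) / 4 := by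
    rw [show -((k + k + 2 : ℕ) : ℝ) - 1 = (-((k + k : ℕ) : ℝ) - 1) - 2 by push_cast; ring,
      Real.rpow_sub two_pos]
    norm_num
  have hΓ : Real.Gamma ((((k + k + 2 : ℕ) : ℝ) + 1) / 2 + b)
      = ((((k + k : ℕ) : ℝ) + 1) / 2 + b) * Real.Gamma ((((k + k : ℕ) : ℝ) + 1) / 2 + b) := by
    rw [← Real.Gamma_add_one (by positivity)]
    push_cast
    ring_nf
  have hΓpos : 0 < Real.Gamma ((((k + k : ℕ) : ℝ) + 1) / 2 + b) :=
    Real.Gamma_pos_of_pos (by positivity)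
  have hneg : (-1 : ℝ) ^ (k + k + 2) = (-1) ^ (k + k) := by
    rw [pow_add]
    norm_num
  simp only [hyp2F1ClosedForm, hhalf, hhalf', hpow, hΓ, hneg, Nat.factorial_succ]
  field_simp
  push_cast
  ring

lemma hyp2F1ClosedForm_add_two (b : ℝ) (hb : 0 < b) (n : ℕ) :
    (2 * b + n + 1) * hyp2F1ClosedForm b (n + 2) = (n + 1) * hyp2F1ClosedForm b n := by
  rcases n.even_or_odd with hn | hn
  · exact hyp2F1ClosedForm_add_two_of_even b hb hn
  · rw [hyp2F1ClosedForm_of_odd b hn, hyp2F1ClosedForm_of_odd b (hn.add_even even_two)]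
    ring

theorem hyp2F1Sum_eq_closedForm (b : ℝ) (hb : 0 < b) (n : ℕ) :
    hyp2F1Sum b n = hyp2F1ClosedForm b n := by
  induction n using Nat.twoStepInduction with
  | zero => rw [hyp2F1Sum_zero, hyp2F1ClosedForm_zero b hb]
  | one => rw [hyp2F1Sum_one b hb.ne', hyp2F1ClosedForm_of_odd b odd_one]
  | more n ih _ =>
    have hpos : (2 * b + n + 1 : ℝ) ≠ 0 := by positivity
    apply mul_left_cancel₀ hpos
    rw [hyp2F1Sum_add_two b hb, hyp2F1ClosedForm_add_two b hb, ih]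

theorem stmt14 (n : ℕ) (b : ℝ) (hb : 0 < b) :
    ∑ j ∈ Finset.range (n + 1),
      ((ascPochhammer ℝ j).eval (-(n : ℝ)) * (ascPochhammer ℝ j).eval b
        / ((ascPochhammer ℝ j).eval (2 * b) * (j.factorial : ℝ))) * (2 : ℝ) ^ j
    = (n.factorial : ℝ) * (2 : ℝ) ^ (-(n : ℝ) - 1) * (1 + (-1 : ℝ) ^ n)
        * Real.Gamma (b + 1/2)
        / (((n / 2).factorial : ℝ) * Real.Gamma (((n : ℝ) + 1) / 2 + b)) :=
  hyp2F1Sum_eq_closedForm b hb n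
end

section
/- For d = 3, the set of admissible eFGM parameters 𝒯_3 = {(θ_2, θ_3) ∈ ℝ² : 1 + θ_2(ε_1ε_2 + ε_1ε_3 + ε_2ε_3) + θ_3 ε_1ε_2ε_3 ≥ 0 for all (ε_1,ε_2,ε_3) ∈ {−1,1}³} equals the convex hull of the four points (0,1), (−1/3, 0), (1, 0), and (0, −1). -/
theorem stmt16 :
    {θ : ℝ × ℝ | ∀ ε₁ ε₂ ε₃ : ℝ, (ε₁ = -1 ∨ ε₁ = 1) → (ε₂ = -1 ∨ ε₂ = 1) →
        (ε₃ = -1 ∨ ε₃ = 1) →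
      0 ≤ 1 + θ.1 * (ε₁ * ε₂ + ε₁ * ε₃ + ε₂ * ε₃) + θ.2 * (ε₁ * ε₂ * ε₃)}
    = convexHull ℝ {((0 : ℝ), (1 : ℝ)), (-1/3, 0), (1, 0), (0, -1)} := by
  apply Set.Subset.antisymm
  · rintro ⟨a, b⟩ h
    have h1 : 0 ≤ 1 + 3 * a + b := by
      have := h 1 1 1 (Or.inr rfl) (Or.inr rfl) (Or.inr rfl); dsimp at this; linarith
    have h2 : 0 ≤ 1 + 3 * a - b := by
      have := h (-1) (-1) (-1) (Or.inl rfl) (Or.inl rfl) (Or.inl rfl); dsimp at this; linarith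
    have h3 : 0 ≤ 1 - a - b := by
      have := h 1 1 (-1) (Or.inr rfl) (Or.inr rfl) (Or.inl rfl); dsimp at this; linarith
    have h4 : 0 ≤ 1 - a + b := by
      have := h 1 (-1) (-1) (Or.inr rfl) (Or.inl rfl) (Or.inl rfl); dsimp at this; linarith
    set z : Fin 4 → ℝ × ℝ := ![(0, 1), (-1/3, 0), (1, 0), (0, -1)] with hz
    have hzmem : ∀ i ∈ Finset.univ, z i ∈
        ({((0 : ℝ), (1 : ℝ)), (-1/3, 0), (1, 0), (0, -1)} : Set (ℝ × ℝ)) := by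
      intro i _
      fin_cases i <;> simp [hz]
    rcases le_or_gt 0 b with hb | hb
    · set w : Fin 4 → ℝ := ![b, 3 * (1 - a - b) / 4, (1 + 3 * a - b) / 4, 0] with hw
      have hw0 : ∀ i ∈ Finset.univ, 0 ≤ w i := by
        intro i _
        fin_cases i <;> simp [hw] <;> linarith
      have hws : 0 < ∑ i, w i := by
        simp [hw, Fin.sum_univ_four]; linarith
      have := Finset.centerMass_mem_convexHull Finset.univ hw0 hws hzmem
      have hcm : Finset.univ.centerMass w z = (a, b) := by
        rw [Finset.centerMass]
        have hsum : ∑ i, w i = 1 := by simp [hw, Fin.sum_univ_four]; ring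
        rw [hsum]
        simp [hw, hz, Fin.sum_univ_four, Prod.ext_iff]
        ring
      rwa [hcm] at this
    · set w : Fin 4 → ℝ := ![0, 3 * (1 - a + b) / 4, (1 + 3 * a + b) / 4, -b] with hw
      have hw0 : ∀ i ∈ Finset.univ, 0 ≤ w i := by
        intro i _
        fin_cases i <;> simp [hw] <;> linarith
      have hws : 0 < ∑ i, w i := by
        simp [hw, Fin.sum_univ_four]; linarith
      have := Finset.centerMass_mem_convexHull Finset.univ hw0 hws hzmem
      have hcm : Finset.univ.centerMass w z = (a, b) := by
        rw [Finset.centerMass]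
        have hsum : ∑ i, w i = 1 := by simp [hw, Fin.sum_univ_four]; ring
        rw [hsum]
        simp [hw, hz, Fin.sum_univ_four, Prod.ext_iff]
        ring
      rwa [hcm] at this
  · apply convexHull_min
    · intro p hp
      simp only [Set.mem_insert_iff, Set.mem_singleton_iff] at hp
      rcases hp with rfl | rfl | rfl | rfl <;>
        (rintro ε₁ ε₂ ε₃ (rfl | rfl) (rfl | rfl) (rfl | rfl) <;> norm_num)
    · rintro ⟨x1, x2⟩ hx ⟨y1, y2⟩ hy p q hp hq hpq ε₁ ε₂ ε₃ he1 he2 he3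
      have Hx := hx ε₁ ε₂ ε₃ he1 he2 he3
      have Hy := hy ε₁ ε₂ ε₃ he1 he2 he3
      dsimp at Hx Hy
      simp only [Prod.smul_mk, Prod.mk_add_mk, smul_eq_mul]
      nlinarith [mul_nonneg hp Hx, mul_nonneg hq Hy]
end
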